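/- Let m >= 3 and let S be the set of permutations sigma in S_{2m} with sigma(1) < sigma(3) < ... < sigma(2m-1), sigma(2) < sigma(4) < ... < sigma(2m), and sigma(1) < sigma(2m). For sigma in S, every descent j of sigma^{-1} (i.e., sigma^{-1}(j) > sigma^{-1}(j+1)) satisfies: exactly one of sigma^{-1}(j), sigma^{-1}(j+1) is odd, and j+1 is not a descent of sigma^{-1}. Consequently sigma^{-1} has at most m descents. -/
import Mathlib

theorem stmt_18 (m : ℕ) (hm : 3 ≤ m) (σ τ : ℕ → ℕ)
    (hσ : Set.BijOn σ (Set.Icc 1 (2 * m)) (Set.Icc 1 (2 * m)))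
    (hinv : ∀ j ∈ Set.Icc 1 (2 * m), τ (σ j) = j ∧ σ (τ j) = j)
    (hodd : ∀ k, 1 ≤ k → k ≤ m - 1 → σ (2 * k - 1) < σ (2 * k + 1))
    (heven : ∀ k, 1 ≤ k → k ≤ m - 1 → σ (2 * k) < σ (2 * k + 2))
    (h1 : σ 1 < σ (2 * m)) :
    (∀ j, 1 ≤ j → j ≤ 2 * m - 1 → τ (j + 1) < τ j →
      ((Odd (τ j) ↔ ¬ Odd (τ (j + 1))) ∧
        ¬ (j + 1 ≤ 2 * m - 1 ∧ τ (j + 2) < τ (j + 1)))) ∧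
    ((Finset.Icc 1 (2 * m - 1)).filter (fun j => τ (j + 1) < τ j)).card ≤ m := by
  -- step: σ a < σ (a+2)
  have step : ∀ a, 1 ≤ a → a + 2 ≤ 2 * m → σ a < σ (a + 2) := by
    intro a ha ha2
    rcases Nat.even_or_odd a with ⟨k, hk⟩ | ⟨k, hk⟩
    · have hk1 : 1 ≤ k := by omega
      have hk2 : k ≤ m - 1 := by omega
      have := heven k hk1 hk2
      rwa [show 2 * k = a by omega] at this
    · have hk1 : 1 ≤ k + 1 := by omega
      have hk2 : k + 1 ≤ m - 1 := by omega
      have := hodd (k + 1) hk1 hk2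
      rwa [show 2 * (k + 1) - 1 = a by omega, show 2 * (k + 1) + 1 = a + 2 by omega] at this
  have chain : ∀ d a, 1 ≤ a → a + 2 * (d + 1) ≤ 2 * m → σ a < σ (a + 2 * (d + 1)) := by
    intro d
    induction d with
    | zero => intro a ha h2; simpa using step a ha (by omega)
    | succ n ih =>
      intro a ha h2
      have h1' := step a ha (by omega)
      have h2' := ih (a + 2) (by omega) (by omega)
      have : a + 2 + 2 * (n + 1) = a + 2 * (n + 1 + 1) := by ring
      rw [this] at h2'
      exact h1'.trans h2'
  have mono : ∀ a b, 1 ≤ a → b ≤ 2 * m → a < b → a % 2 = b % 2 → σ a < σ b := by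
    intro a b ha hb hab hpar
    have hd : ∃ d, b = a + 2 * (d + 1) := by
      refine ⟨(b - a) / 2 - 1, ?_⟩; omega
    obtain ⟨d, rfl⟩ := hd
    exact chain d a ha hb
  -- τ maps Icc into Icc, inverse
  have τmem : ∀ j ∈ Set.Icc 1 (2 * m), τ j ∈ Set.Icc 1 (2 * m) ∧ σ (τ j) = j := by
    intro j hj
    obtain ⟨x, hx, hxe⟩ := hσ.surjOn hj
    have := (hinv x hx).1
    rw [hxe] at this
    exact ⟨this ▸ hx, (hinv j hj).2⟩
  -- key: descent at j implies opposite parity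
  have key : ∀ j, 1 ≤ j → j + 1 ≤ 2 * m → τ (j + 1) < τ j → τ j % 2 ≠ τ (j + 1) % 2 := by
    intro j hj hj1 hd hpar
    obtain ⟨ha, hsa⟩ := τmem j ⟨hj, by omega⟩
    obtain ⟨hb, hsb⟩ := τmem (j + 1) ⟨by omega, hj1⟩
    have := mono (τ (j + 1)) (τ j) hb.1 ha.2 hd hpar.symm
    omega
  constructor
  · intro j hj hj1 hd
    have hj2m : j + 1 ≤ 2 * m := by omega
    have hkey := key j hj hj2m hd
    constructor
    · rw [Nat.odd_iff, Nat.odd_iff]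
      omega
    · rintro ⟨hle, hd2⟩
      have hd2' : τ (j + 1 + 1) < τ (j + 1) := hd2
      have hkey2 := key (j + 1) (by omega) (by omega) hd2'
      simp only [show j + 1 + 1 = j + 2 from rfl] at hkey2
      obtain ⟨ha, hsa⟩ := τmem j ⟨hj, by omega⟩
      obtain ⟨hc, hsc⟩ := τmem (j + 2) ⟨by omega, by omega⟩
      have := mono (τ (j + 2)) (τ j) hc.1 ha.2 (by omega) (by omega)
      omega
  · -- non-adjacency implies card ≤ m
    set D := (Finset.Icc 1 (2 * m - 1)).filter (fun j => τ (j + 1) < τ j) with hD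
    have hnadj : ∀ j ∈ D, j + 1 ∉ D := by
      intro j hjD hj1D
      simp only [hD, Finset.mem_filter, Finset.mem_Icc] at hjD hj1D
      have hkey := key j hjD.1.1 (by omega) hjD.2
      have hd2' : τ (j + 1 + 1) < τ (j + 1) := hj1D.2
      have hkey2 := key (j + 1) (by omega) (by omega) hd2'
      obtain ⟨ha, hsa⟩ := τmem j ⟨hjD.1.1, by omega⟩
      obtain ⟨hc, hsc⟩ := τmem (j + 1 + 1) ⟨by omega, by omega⟩
      have := mono (τ (j + 1 + 1)) (τ j) hc.1 ha.2 (by omega) (by omega)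
      omega
    have hinj : Set.InjOn (fun j => (j + 1) / 2) D := by
      intro a haD b hbD hab
      simp only at hab
      by_contra hne
      rcases Nat.lt_or_ge a b with h | h
      · have : b = a + 1 := by omega
        exact hnadj a haD (this ▸ hbD)
      · have hlt : b < a := by omega
        have : a = b + 1 := by omega
        exact hnadj b hbD (this ▸ haD)
    have hmap : ∀ j ∈ D, (j + 1) / 2 ∈ Finset.Icc 1 m := by
      intro j hjD
      simp only [hD, Finset.mem_filter, Finset.mem_Icc] at hjD
      simp only [Finset.mem_Icc]
      omega
    have := Finset.card_le_card_of_injOn (fun j => (j + 1) / 2) hmap hinj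
    simpa using this
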